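/- Let q = p^e for a prime p and e ≥ 1, let a > 0, and let r_n be a sequence of nonnegative integers with r_n = 0 for n < 0 and satisfying the duality r_{s−n} = r_n for s = a(q−1)/2 + q·c (some fixed c, all quantities integers). Suppose α_1,…,α_N are indexed so that N = N^- + N^+ with N^- ≤ Σ_{n=0}^{⌈a(q−1)/2⌉ − 1} r_n and N^+ ≤ Σ_{n = a(q−1)/2 + q c'}^{a(q−1) + q c'} r_n for appropriate c'. Then, using the duality, N ≤ 2 Σ_{n=0}^{⌊a(q−1)/2⌋} r_n. -/

import Mathlib

/-- The combinatorial core of the F-signature bound: let `q = p^e` be a prime power,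
`a > 0`, and let `(r_n)` be nonnegative integers vanishing in negative degrees and
symmetric about `s = a(q-1)/2 + q·c` (Gorenstein duality), where all quantities are
integers (`2 ∣ a(q-1)`) and `c'` satisfies `s = a(q-1) + q·c'`. If `N = N⁻ + N⁺` with
`N⁻ ≤ Σ_{n=0}^{a(q-1)/2 - 1} r_n` and `N⁺ ≤ Σ_{n=a(q-1)/2+qc'}^{a(q-1)+qc'} r_n`,
then `N ≤ 2 Σ_{n=0}^{a(q-1)/2} r_n`. -/
theorem F_signature_bound_combinatorial_core
    (p e : ℕ) (hp : p.Prime) (he : 1 ≤ e) (q : ℤ) (hq : q = (p : ℤ) ^ e)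
    (a c c' : ℤ) (ha : 0 < a) (hdiv : 2 ∣ a * (q - 1))
    (hcc' : a * (q - 1) / 2 + q * c = a * (q - 1) + q * c')
    (r : ℤ → ℕ) (hr0 : ∀ n < 0, r n = 0)
    (hdual : ∀ n : ℤ, r (a * (q - 1) / 2 + q * c - n) = r n)
    (N Nminus Nplus : ℕ) (hN : N = Nminus + Nplus)
    (hminus : Nminus ≤ ∑ n ∈ Finset.Icc (0 : ℤ) (a * (q - 1) / 2 - 1), r n)
    (hplus : Nplus ≤
      ∑ n ∈ Finset.Icc (a * (q - 1) / 2 + q * c') (a * (q - 1) + q * c'), r n) :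
    N ≤ 2 * ∑ n ∈ Finset.Icc (0 : ℤ) (a * (q - 1) / 2), r n := by
  set m := a * (q - 1) / 2 with hm
  have h2m : 2 * m = a * (q - 1) := Int.mul_ediv_cancel' hdiv
  have hlo : m + q * c' = q * c := by linarith [hcc']
  have hhi : a * (q - 1) + q * c' = m + q * c := hcc'.symm
  have key : ∑ n ∈ Finset.Icc (m + q * c') (a * (q - 1) + q * c'), r n
      = ∑ n ∈ Finset.Icc (0 : ℤ) m, r n := by
    rw [hlo, hhi]
    refine Finset.sum_nbij' (fun n => m + q * c - n) (fun n => m + q * c - n)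
      ?_ ?_ ?_ ?_ ?_
    · intro x hx
      simp only [Finset.mem_Icc] at hx ⊢
      omega
    · intro x hx
      simp only [Finset.mem_Icc] at hx ⊢
      omega
    · intro x _; omega
    · intro x _; omega
    · intro x _; exact (hdual x).symm
  have hsub : ∑ n ∈ Finset.Icc (0 : ℤ) (m - 1), r n ≤ ∑ n ∈ Finset.Icc (0 : ℤ) m, r n :=
    Finset.sum_le_sum_of_subset (Finset.Icc_subset_Icc le_rfl (by omega))
  omega
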